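/- arXiv:2412.19202 — 6 statements merged into one kernel-verified Lean document; each statement's English description precedes it below -/
import Mathlib

section
/- Let X be a nonempty finite metric space, let m be a natural number with m > #X, and let λ ≥ 0 be a real number. Then 2·d_GH(λΔ_m, X) = max{λ, diam X − λ}, where d_GH denotes the Gromov–Hausdorff distance. -/
open GromovHausdorff Metric

/-- For a nonempty finite metric space `X`, a natural number `m > #X`, and a
real `λ ≥ 0`, one has `2 d_GH(λΔ_m, X) = max {λ, diam X - λ}`.  Here the simplex `λΔ_m` is
represented by an abstract metric space `S` all of whose nonzero distances equal `λ`, having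
`m` points when `λ > 0` and a single point when `λ = 0`. -/
theorem two_ghDist_simplex_eq_max
    (X : Type*) [MetricSpace X] [Fintype X] [Nonempty X]
    (m : ℕ) (hm : Fintype.card X < m)
    (lam : ℝ) (hlam : 0 ≤ lam)
    (S : Type*) [MetricSpace S] [Fintype S] [Nonempty S]
    (hcard : if lam = 0 then Fintype.card S = 1 else Fintype.card S = m)
    (hdist : ∀ x y : S, x ≠ y → dist x y = lam) :
    2 * GromovHausdorff.ghDist S X
      = max lam (Metric.diam (Set.univ : Set X) - lam) := by
  set D := Metric.diam (Set.univ : Set X) with hD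
  set M := max lam (D - lam) with hM
  have hDnonneg : 0 ≤ D := Metric.diam_nonneg
  have hMlam : lam ≤ M := le_max_left _ _
  have hMdiam : D - lam ≤ M := le_max_right _ _
  have hMnonneg : 0 ≤ M := hlam.trans hMlam
  have hdistle : ∀ x y : S, dist x y ≤ lam := by
    intro x y
    rcases eq_or_ne x y with rfl | h
    · simp [hlam]
    · exact (hdist x y h).le
  -- Lower bound pieces
  set r := GromovHausdorff.ghDist S X with hr
  have hrnonneg : 0 ≤ r := dist_nonneg
  -- optimal coupling
  set φ := optimalGHInjl S X
  set ψ := optimalGHInjr S X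
  have hφ : Isometry φ := isometry_optimalGHInjl S X
  have hψ : Isometry ψ := isometry_optimalGHInjr S X
  have hopt : hausdorffDist (Set.range φ) (Set.range ψ) = r := hausdorffDist_optimal
  have hcφ : IsCompact (Set.range φ) := isCompact_range hφ.continuous
  have hcψ : IsCompact (Set.range ψ) := isCompact_range hψ.continuous
  have hne : EMetric.hausdorffEdist (Set.range φ) (Set.range ψ) ≠ ⊤ :=
    hausdorffEdist_ne_top_of_nonempty_of_bounded (Set.range_nonempty _)
      (Set.range_nonempty _) hcφ.isBounded hcψ.isBounded
  -- for each s : S, find x : X with dist (φ s) (ψ x) ≤ r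
  have hSX : ∀ s : S, ∃ x : X, dist (φ s) (ψ x) ≤ r := by
    intro s
    obtain ⟨y, ⟨x, rfl⟩, hy⟩ := hcψ.exists_infDist_eq_dist (Set.range_nonempty _) (φ s)
    refine ⟨x, ?_⟩
    rw [← hy, ← hopt]
    exact infDist_le_hausdorffDist_of_mem (Set.mem_range_self s) hne
  have hXS : ∀ x : X, ∃ s : S, dist (ψ x) (φ s) ≤ r := by
    intro x
    obtain ⟨y, ⟨s, rfl⟩, hy⟩ := hcφ.exists_infDist_eq_dist (Set.range_nonempty _) (ψ x)
    refine ⟨s, ?_⟩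
    rw [← hy, ← hopt, hausdorffDist_comm]
    exact infDist_le_hausdorffDist_of_mem (Set.mem_range_self x)
      (by rwa [EMetric.hausdorffEdist_comm])
  -- lower bound: D - lam ≤ 2 r
  have hlow2 : D ≤ lam + 2 * r := by
    apply Metric.diam_le_of_forall_dist_le (by linarith)
    intro x _ x' _
    obtain ⟨s, hs⟩ := hXS x
    obtain ⟨s', hs'⟩ := hXS x'
    calc dist x x' = dist (ψ x) (ψ x') := (hψ.dist_eq x x').symm
      _ ≤ dist (ψ x) (φ s) + dist (φ s) (φ s') + dist (φ s') (ψ x') := dist_triangle4 _ _ _ _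
      _ ≤ r + lam + r := by
          have h1 : dist (φ s) (φ s') = dist s s' := hφ.dist_eq s s'
          have h2 : dist (φ s') (ψ x') = dist (ψ x') (φ s') := dist_comm _ _
          rw [h1, h2]
          gcongr
          exact hdistle s s'
      _ = lam + 2 * r := by ring
  -- lower bound: lam ≤ 2 r
  have hlow1 : lam ≤ 2 * r := by
    rcases eq_or_ne lam 0 with h0 | h0
    · rw [h0]; linarith
    · rw [if_neg h0] at hcard
      have hcardlt : Fintype.card X < Fintype.card S := hcard ▸ hm
      choose g hg using hSX
      obtain ⟨s, s', hss', hgss'⟩ := Fintype.exists_ne_map_eq_of_card_lt g hcardlt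
      calc lam = dist s s' := (hdist s s' hss').symm
        _ = dist (φ s) (φ s') := (hφ.dist_eq s s').symm
        _ ≤ dist (φ s) (ψ (g s)) + dist (ψ (g s)) (φ s') := dist_triangle _ _ _
        _ ≤ r + r := by
            have : dist (ψ (g s)) (φ s') = dist (φ s') (ψ (g s')) := by
              rw [dist_comm, hgss']
            rw [this]
            exact add_le_add (hg s) (hg s')
        _ = 2 * r := by ring
  -- upper bound: 2 r ≤ M
  have hup : r ≤ M / 2 := by
    rcases eq_or_ne lam 0 with h0 | h0
    · -- S is a single point
      rw [if_pos h0] at hcard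
      have hsub : Subsingleton S := Fintype.card_le_one_iff_subsingleton.mp hcard.le
      have : GromovHausdorff.ghDist X S ≤ 0 + M / 2 + 0 := by
        refine ghDist_le_of_approx_subsets
          (fun x : (Set.univ : Set X) => (Classical.arbitrary S)) ?_ ?_ ?_
        · intro x; exact ⟨x, Set.mem_univ x, by simp⟩
        · intro y
          refine ⟨⟨Classical.arbitrary X, Set.mem_univ _⟩, ?_⟩
          rw [hsub.elim y (Classical.arbitrary S)]
          simp
        · intro x y
          have hd : dist (Classical.arbitrary S) (Classical.arbitrary S) = 0 := by simp
          rw [hd, sub_zero, abs_of_nonneg dist_nonneg, Subtype.dist_eq]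
          have : dist (x : X) (y : X) ≤ D :=
            Metric.dist_le_diam_of_mem (Set.finite_univ.isBounded) trivial trivial
          have : D - lam ≤ M := hMdiam
          rw [h0] at this
          linarith
      have hcomm : GromovHausdorff.ghDist S X = GromovHausdorff.ghDist X S := dist_comm _ _
      rw [hr, hcomm]
      linarith
    · -- lam ≠ 0 : card S = m > card X, use a surjection S → X
      rw [if_neg h0] at hcard
      have hcardle : Fintype.card X ≤ Fintype.card S := by omega
      obtain ⟨i⟩ := Function.Embedding.nonempty_of_card_le hcardle
      set f : S → X := Function.invFun i with hf
      have hfi : ∀ x : X, f (i x) = x := fun x => Function.leftInverse_invFun i.injective x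
      have : GromovHausdorff.ghDist S X ≤ 0 + M / 2 + 0 := by
        refine ghDist_le_of_approx_subsets (fun s : (Set.univ : Set S) => f s) ?_ ?_ ?_
        · intro s; exact ⟨s, Set.mem_univ s, by simp⟩
        · intro x
          exact ⟨⟨i x, Set.mem_univ _⟩, by show dist x (f (i x)) ≤ 0; rw [hfi]; simp⟩
        · intro p q
          rw [Subtype.dist_eq]
          rcases eq_or_ne (p : S) (q : S) with hpq | hpq
          · have : p = q := Subtype.ext hpq
            subst this
            simp [hMnonneg]
          · rw [hdist _ _ hpq]
            have h1 : dist (f (p : S)) (f (q : S)) ≤ D :=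
              Metric.dist_le_diam_of_mem (Set.finite_univ.isBounded) trivial trivial
            have h2 : 0 ≤ dist (f (p : S)) (f (q : S)) := dist_nonneg
            rw [abs_sub_le_iff]
            constructor <;> linarith
      rw [hr]; linarith
  have : 2 * r ≤ M := by linarith
  linarith [max_le hlow1 (by linarith : D - lam ≤ 2 * r), this]
end

section
/- Let X be a nonempty compact metric space and m a natural number with 2 ≤ m ≤ #X, and choose any real number λ with 0 < λ < diam X. Then: X admits a partition into m nonempty subsets X_1, …, X_m such that for some ε > 0 one has diam X_i ≤ diam X − ε for all i, if and only if 2·d_GH(λΔ_m, X) < diam X. Moreover, if no such partition exists, then 2·d_GH(λΔ_m, X) = diam X. -/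
open GromovHausdorff Metric

/-- A partition of `X` into `m` nonempty subsets all of whose diameters are at most
`diam X - ε` for some common `ε > 0`. -/
def HasBorsukPartition (X : Type*) [MetricSpace X] (m : ℕ) : Prop :=
  ∃ P : Fin m → Set X,
    (∀ i, (P i).Nonempty) ∧
    Pairwise (Function.onFun Disjoint P) ∧
    (⋃ i, P i) = Set.univ ∧
    ∃ ε > (0 : ℝ), ∀ i, Metric.diam (P i) ≤ Metric.diam (Set.univ : Set X) - ε

section BorsukAux

/-- If there is a surjection `f : X → S` whose distortion is at most `2r`, then the
Gromov-Hausdorff distance between `S` and `X` is at most `r`. -/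
theorem aux_ghDist_le {S : Type*} {X : Type*} [MetricSpace S] [CompactSpace S] [Nonempty S]
    [MetricSpace X] [CompactSpace X] [Nonempty X]
    (f : X → S) (hsurj : Function.Surjective f) {r : ℝ} (hr : 0 < r)
    (H : ∀ p q : X, |dist (f p) (f q) - dist p q| ≤ 2 * r) :
    GromovHausdorff.ghDist S X ≤ r := by
  letI : MetricSpace (S ⊕ X) :=
    Metric.glueMetricApprox f (id : X → X) r hr (fun p q => by simpa using H p q)
  have key : ∀ p : X, dist (Sum.inl (f p) : S ⊕ X) (Sum.inr p) = r := fun p =>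
    Metric.glueDist_glued_points f (id : X → X) r p
  have Il : Isometry (Sum.inl : S → S ⊕ X) := Isometry.of_dist_eq fun _ _ => rfl
  have Ir : Isometry (Sum.inr : X → S ⊕ X) := Isometry.of_dist_eq fun _ _ => rfl
  refine le_trans (ghDist_le_hausdorffDist Il Ir)
    (hausdorffDist_le_of_mem_dist hr.le ?_ ?_)
  · rintro _ ⟨s, rfl⟩
    obtain ⟨p, rfl⟩ := hsurj s
    exact ⟨Sum.inr p, Set.mem_range_self p, le_of_eq (key p)⟩
  · rintro _ ⟨p, rfl⟩
    exact ⟨Sum.inl (f p), Set.mem_range_self (f p),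
      le_of_eq (by rw [dist_comm]; exact key p)⟩

/-- Given a map `F : X → S` with fibers of diameter at most `c`, and an embedding of `S`
into `X`, one can modify `F` into a surjection with fibers of diameter at most `c`. -/
theorem aux_surjectify {X : Type*} {S : Type*} [MetricSpace X] [Fintype S]
    (ι : S ↪ X) (F : X → S) {c : ℝ} (hc : 0 ≤ c)
    (hF : ∀ x y, F x = F y → dist x y ≤ c) :
    ∃ G : X → S, Function.Surjective G ∧ ∀ x y, G x = G y → dist x y ≤ c := by
  classical
  suffices key : ∀ (n : ℕ) (F : X → S), (∀ x y, F x = F y → dist x y ≤ c) →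
      (Finset.univ.filter fun s => s ∉ Set.range F).card ≤ n →
      ∃ G : X → S, Function.Surjective G ∧ ∀ x y, G x = G y → dist x y ≤ c from
    key _ F hF le_rfl
  intro n
  induction n with
  | zero =>
    intro F hF h0
    refine ⟨F, fun s => ?_, hF⟩
    by_contra hs
    have hmem : s ∈ Finset.univ.filter (fun s => s ∉ Set.range F) :=
      Finset.mem_filter.2 ⟨Finset.mem_univ s, fun h => hs h⟩
    have := Finset.card_pos.2 ⟨s, hmem⟩
    omega
  | succ n ih =>
    intro F hF hle
    by_cases hsurj : Function.Surjective F
    · exact ⟨F, hsurj, hF⟩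
    have hninj : ¬ Function.Injective F := by
      intro hinj
      have hs : Function.Surjective (F ∘ ι) :=
        Finite.injective_iff_surjective.1 (hinj.comp ι.injective)
      exact hsurj (Function.Surjective.of_comp hs)
    obtain ⟨a, b, hab, hne⟩ := Function.not_injective_iff.1 hninj
    obtain ⟨s0, hs0⟩ := not_forall.1 hsurj
    push_neg at hs0
    set G := Function.update F a s0 with hGdef
    have hrange : ∀ s ∈ Set.range F, s ∈ Set.range G := by
      rintro s ⟨x, rfl⟩
      by_cases hxa : x = a
      · subst hxa
        exact ⟨b, by rw [hGdef, Function.update_of_ne (Ne.symm hne), hab]⟩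
      · exact ⟨x, by rw [hGdef, Function.update_of_ne hxa]⟩
    have hs0G : s0 ∈ Set.range G := ⟨a, by rw [hGdef, Function.update_self]⟩
    have hGfib : ∀ x y, G x = G y → dist x y ≤ c := by
      intro x y hxy
      rw [hGdef] at hxy
      by_cases hx : x = a <;> by_cases hy : y = a
      · subst hx; subst hy; simpa using hc
      · exfalso
        subst hx
        rw [Function.update_self, Function.update_of_ne hy] at hxy
        exact hs0 y hxy.symm
      · exfalso
        subst hy
        rw [Function.update_of_ne hx, Function.update_self] at hxy
        exact hs0 x hxy
      · rw [Function.update_of_ne hx, Function.update_of_ne hy] at hxy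
        exact hF x y hxy
    refine ih G hGfib ?_
    have hsub : (Finset.univ.filter fun s => s ∉ Set.range G) ⊆
        (Finset.univ.filter fun s => s ∉ Set.range F).erase s0 := by
      intro s hsmem
      rw [Finset.mem_filter] at hsmem
      refine Finset.mem_erase.2 ⟨?_, Finset.mem_filter.2
        ⟨Finset.mem_univ _, fun h => hsmem.2 (hrange s h)⟩⟩
      rintro rfl
      exact hsmem.2 hs0G
    have hmem0 : s0 ∈ Finset.univ.filter fun s => s ∉ Set.range F :=
      Finset.mem_filter.2 ⟨Finset.mem_univ _, fun h => by
        obtain ⟨x, hx⟩ := h; exact hs0 x hx⟩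
    have hcards := Finset.card_le_card hsub
    rw [Finset.card_erase_of_mem hmem0] at hcards
    omega

end BorsukAux

/-- Generalized Borsuk problem: let `X` be a nonempty compact metric space,
`m` a natural number with `2 ≤ m ≤ #X`, and `0 < λ < diam X`.  Then `X` can be partitioned
into `m` nonempty subsets of strictly smaller diameter iff `2 d_GH(λΔ_m, X) < diam X`;
if not, then `2 d_GH(λΔ_m, X) = diam X`.  The simplex `λΔ_m` is represented by an abstract
`m`-point metric space `S` all of whose nonzero distances equal `λ`. -/
theorem borsuk_partition_iff_ghDist
    (X : Type*) [MetricSpace X] [CompactSpace X] [Nonempty X]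
    (m : ℕ) (hm2 : 2 ≤ m) (hmX : (m : Cardinal) ≤ Cardinal.mk X)
    (lam : ℝ) (hlam : 0 < lam) (hlamX : lam < Metric.diam (Set.univ : Set X))
    (S : Type*) [MetricSpace S] [Fintype S] [Nonempty S]
    (hcard : Fintype.card S = m)
    (hdist : ∀ x y : S, x ≠ y → dist x y = lam) :
    (HasBorsukPartition X m ↔
      2 * GromovHausdorff.ghDist S X < Metric.diam (Set.univ : Set X)) ∧
    (¬ HasBorsukPartition X m →
      2 * GromovHausdorff.ghDist S X = Metric.diam (Set.univ : Set X)) := by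
  classical
  set d := Metric.diam (Set.univ : Set X) with hd
  have hd0 : 0 < d := hlam.trans hlamX
  let e : S ≃ Fin m := Fintype.equivFinOfCardEq hcard
  -- an embedding of `S` into `X`
  obtain ⟨p, hp⟩ := Cardinal.le_mk_iff_exists_set.1 hmX
  obtain ⟨t, hts, htcard⟩ := Cardinal.mk_set_eq_nat_iff_finset.1 hp
  let ι : S ↪ X :=
    ((Fintype.equivFinOfCardEq hcard).trans
      (Finset.equivFinOfCardEq htcard).symm).toEmbedding.trans
      (Function.Embedding.subtype _)
  have hdistle : ∀ x y : X, dist x y ≤ d := fun x y =>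
    dist_le_diam_of_mem isCompact_univ.isBounded (Set.mem_univ x) (Set.mem_univ y)
  -- Direction 1: a good partition gives a strict inequality
  have dir1 : HasBorsukPartition X m → 2 * ghDist S X < d := by
    rintro ⟨P, hPne, hPdisj, hPunion, ε, hε, hPdiam⟩
    set c := max (max lam (d - lam)) (d - ε) with hc
    have hlamc : lam ≤ c := (le_max_left _ _).trans (le_max_left _ _)
    have hdlamc : d - lam ≤ c := (le_max_right _ _).trans (le_max_left _ _)
    have hdec : d - ε ≤ c := le_max_right _ _
    have hc0 : 0 < c := lt_of_lt_of_le hlam hlamc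
    have hcd : c < d := by
      apply max_lt (max_lt hlamX (by linarith)) (by linarith)
    have hex : ∀ x : X, ∃ i, x ∈ P i := by
      intro x
      have hx : x ∈ ⋃ i, P i := by rw [hPunion]; trivial
      simpa using hx
    choose idx hidx using hex
    have huniq : ∀ x i, x ∈ P i → idx x = i := by
      intro x i hxi
      by_contra hne
      exact (Set.disjoint_left.1 (hPdisj hne)) (hidx x) hxi
    set f : X → S := fun x => e.symm (idx x) with hf
    have hfsurj : Function.Surjective f := by
      intro s
      obtain ⟨x, hx⟩ := hPne (e s)
      refine ⟨x, ?_⟩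
      rw [hf]
      simp only
      rw [huniq x (e s) hx, Equiv.symm_apply_apply]
    have H : ∀ p q : X, |dist (f p) (f q) - dist p q| ≤ 2 * (c / 2) := by
      intro p q
      have h2 : 2 * (c / 2) = c := by ring
      rw [h2]
      by_cases hpq : idx p = idx q
      · have hfeq : f p = f q := by rw [hf]; simp only; rw [hpq]
        rw [hfeq, dist_self, zero_sub, abs_neg, abs_of_nonneg dist_nonneg]
        have hq : q ∈ P (idx p) := hpq ▸ hidx q
        calc dist p q ≤ Metric.diam (P (idx p)) :=
              dist_le_diam_of_mem (isCompact_univ.isBounded.subset (Set.subset_univ _))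
                (hidx p) hq
          _ ≤ d - ε := hPdiam _
          _ ≤ c := hdec
      · have hfpq : f p ≠ f q := fun h => hpq (e.symm.injective h)
        rw [hdist _ _ hfpq, abs_sub_le_iff]
        constructor
        · have := dist_nonneg (x := p) (y := q)
          linarith
        · have := hdistle p q
          linarith
    have := aux_ghDist_le f hfsurj (by positivity : (0:ℝ) < c / 2) H
    linarith
  -- Direction 2: a strict inequality gives a good partition
  have dir2 : 2 * ghDist S X < d → HasBorsukPartition X m := by
    intro hlt
    set ρ := ghDist S X with hρ
    have hρ0 : (0:ℝ) ≤ ρ :=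
      (dist_nonneg : (0:ℝ) ≤ dist (toGHSpace S) (toGHSpace X))
    set φ := optimalGHInjl S X with hφdef
    set ψ := optimalGHInjr S X with hψdef
    have hφ : Isometry φ := isometry_optimalGHInjl S X
    have hψ : Isometry ψ := isometry_optimalGHInjr S X
    have hrangeφ : IsCompact (Set.range φ) := isCompact_range hφ.continuous
    have hfin : EMetric.hausdorffEdist (Set.range ψ) (Set.range φ) ≠ ⊤ :=
      hausdorffEdist_ne_top_of_nonempty_of_bounded (Set.range_nonempty _)
        (Set.range_nonempty _) (isCompact_range hψ.continuous).isBounded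
        hrangeφ.isBounded
    have hinf : ∀ x : X, ∃ s : S, dist (ψ x) (φ s) ≤ ρ := by
      intro x
      obtain ⟨z, hzmem, hz⟩ := hrangeφ.exists_infDist_eq_dist (Set.range_nonempty _) (ψ x)
      obtain ⟨s, rfl⟩ := hzmem
      refine ⟨s, ?_⟩
      rw [← hz]
      calc Metric.infDist (ψ x) (Set.range φ)
          ≤ Metric.hausdorffDist (Set.range ψ) (Set.range φ) :=
            infDist_le_hausdorffDist_of_mem (Set.mem_range_self x) hfin
        _ = ρ := by rw [hausdorffDist_comm]; exact hausdorffDist_optimal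
    choose F hFd using hinf
    have hFfib : ∀ x y, F x = F y → dist x y ≤ 2 * ρ := by
      intro x y hxy
      have h1 := hFd x
      have h2 := hFd y
      rw [hxy] at h1
      have hdd : dist x y = dist (ψ x) (ψ y) := (hψ.dist_eq x y).symm
      rw [hdd]
      calc dist (ψ x) (ψ y) ≤ dist (ψ x) (φ (F y)) + dist (φ (F y)) (ψ y) :=
            dist_triangle _ _ _
        _ ≤ ρ + ρ := add_le_add h1 (by rw [dist_comm]; exact h2)
        _ = 2 * ρ := by ring
    obtain ⟨G, hGsurj, hGfib⟩ := aux_surjectify ι F (by linarith) hFfib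
    refine ⟨fun i => G ⁻¹' {e.symm i}, ?_, ?_, ?_, d - 2 * ρ, by linarith, ?_⟩
    · intro i
      obtain ⟨x, hx⟩ := hGsurj (e.symm i)
      exact ⟨x, hx⟩
    · intro i j hij
      simp only [Function.onFun]
      rw [Set.disjoint_left]
      rintro x hxi hxj
      apply hij
      rw [Set.mem_preimage, Set.mem_singleton_iff] at hxi hxj
      have : e.symm i = e.symm j := by rw [← hxi, ← hxj]
      exact e.symm.injective this
    · ext x
      simp only [Set.mem_iUnion, Set.mem_univ, iff_true]
      exact ⟨e (G x), by simp⟩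
    · intro i
      rw [← hd]
      have hdiam : Metric.diam (G ⁻¹' {e.symm i}) ≤ 2 * ρ := by
        apply diam_le_of_forall_dist_le (by linarith)
        intro x hx y hy
        rw [Set.mem_preimage, Set.mem_singleton_iff] at hx hy
        exact hGfib x y (hx.trans hy.symm)
      linarith
  -- unconditional upper bound  `2 d_GH ≤ diam X`
  have upper : 2 * ghDist S X ≤ d := by
    set f0 : X → S := Function.invFun ι with hf0def
    have hf0 : Function.Surjective f0 := Function.invFun_surjective ι.injective
    have H : ∀ p q : X, |dist (f0 p) (f0 q) - dist p q| ≤ 2 * (d / 2) := by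
      intro p q
      have h2 : 2 * (d / 2) = d := by ring
      rw [h2, abs_sub_le_iff]
      have hle : dist (f0 p) (f0 q) ≤ lam := by
        by_cases hpq : f0 p = f0 q
        · rw [hpq, dist_self]; exact hlam.le
        · rw [hdist _ _ hpq]
      have h0 := dist_nonneg (x := p) (y := q)
      have h0' := dist_nonneg (x := f0 p) (y := f0 q)
      have := hdistle p q
      constructor <;> linarith
    have := aux_ghDist_le f0 hf0 (by linarith : (0:ℝ) < d / 2) H
    linarith
  exact ⟨⟨dir1, dir2⟩, fun hn => le_antisymm upper (not_lt.1 fun h => hn (dir2 h))⟩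
end

section
/- Let G = (V,E) be a finite simple graph with nonempty vertex set, and fix real numbers a, b with 0 < a < b ≤ 2a. Equip V with the metric d in which d(x,y) = a for adjacent vertices x, y, and d(x,y) = b for distinct nonadjacent vertices. Let m be the greatest positive integer k such that 2·d_GH(aΔ_k, V) = b, and set m = 0 if no such k exists. Then the clique cover number θ(G) equals m + 1. -/
open GromovHausdorff Metric

/-- The metric space `aΔ_k`: `k` points with all nonzero distances equal to `a > 0`. -/
noncomputable def simplexMet (a : ℝ) (ha : 0 < a) (k : ℕ) : MetricSpace (Fin k) where
  dist x y := if x = y then 0 else a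
  dist_self x := if_pos rfl
  dist_comm x y := by by_cases h : x = y <;> simp [h, eq_comm]
  dist_triangle x y z := by
    by_cases hxz : x = z <;> by_cases hxy : x = y <;> by_cases hyz : y = z <;>
      simp_all <;> linarith
  eq_of_dist_eq_zero := by
    intro x y h
    by_contra hxy
    simp only [if_neg hxy] at h
    exact absurd h (ne_of_gt ha)

/-- The Gromov–Hausdorff distance from the simplex `aΔ_k` to a nonempty compact metric
space `V` (junk value `0` when `k = 0`). -/
noncomputable def ghSimplex (a : ℝ) (ha : 0 < a) (k : ℕ)
    (V : Type*) [MetricSpace V] [CompactSpace V] [Nonempty V] : ℝ :=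
  if h : 0 < k then
    letI := simplexMet a ha k
    haveI : Nonempty (Fin k) := Fin.pos_iff_nonempty.mp h
    GromovHausdorff.ghDist (Fin k) V
  else 0

/-- The clique cover number of a simple graph: the least `n` such that the vertex set can be
covered by `n` cliques. -/
noncomputable def cliqueCoverNumber {V : Type*} (G : SimpleGraph V) : ℕ :=
  sInf {n : ℕ | ∃ f : Fin n → Set V, (∀ i, G.IsClique (f i)) ∧ (⋃ i, f i) = Set.univ}

lemma ghSimplex_eq_ghDist {V : Type*} [MetricSpace V] [CompactSpace V] [Nonempty V]
    (a : ℝ) (ha : 0 < a) {k : ℕ} (hk : 0 < k) :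
    ghSimplex a ha k V =
      (letI := simplexMet a ha k
       haveI : Nonempty (Fin k) := Fin.pos_iff_nonempty.mp hk
       GromovHausdorff.ghDist (Fin k) V) := dif_pos hk

/-- Upper bound on `ghSimplex` via a surjective relation with controlled distortion. -/
lemma ghSimplex_le_of_rel {V : Type*} [MetricSpace V] [Fintype V] [Nonempty V]
    (a : ℝ) (ha : 0 < a) (k : ℕ) (hk : 0 < k)
    (c : ℝ) (hc : 0 < c)
    (R : Fin k → V → Prop)
    (hR1 : ∀ i, ∃ v, R i v) (hR2 : ∀ v, ∃ i, R i v)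
    (hRd : ∀ i j v w, R i v → R j w → i ≠ j → |a - dist v w| ≤ 2 * c)
    (hRs : ∀ i v w, R i v → R i w → dist v w ≤ 2 * c) :
    ghSimplex a ha k V ≤ c := by
  rw [ghSimplex_eq_ghDist a ha hk]
  letI := simplexMet a ha k
  haveI : Nonempty (Fin k) := Fin.pos_iff_nonempty.mp hk
  have hdist_eq : ∀ i j : Fin k, dist i j = if i = j then 0 else a := fun i j => rfl
  set Z := {p : Fin k × V // R p.1 p.2} with hZ
  haveI : Nonempty Z := by
    obtain ⟨i⟩ := (inferInstance : Nonempty (Fin k))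
    exact ⟨⟨(i, (hR1 i).choose), (hR1 i).choose_spec⟩⟩
  set Φ : Z → Fin k := fun p => p.1.1 with hΦ
  set Ψ : Z → V := fun p => p.1.2 with hΨ
  have H : ∀ p q : Z, |dist (Φ p) (Φ q) - dist (Ψ p) (Ψ q)| ≤ 2 * c := by
    intro p q
    by_cases hij : Φ p = Φ q
    · rw [hdist_eq, if_pos hij]
      have hd := hRs (Φ p) (Ψ p) (Ψ q) p.2 (by rw [hij]; exact q.2)
      rw [abs_sub_comm, sub_zero, abs_of_nonneg dist_nonneg]
      exact hd
    · rw [hdist_eq, if_neg hij]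
      exact hRd (Φ p) (Φ q) (Ψ p) (Ψ q) p.2 q.2 hij
  letI M : MetricSpace (Fin k ⊕ V) := glueMetricApprox Φ Ψ c hc H
  have isomL : Isometry (Sum.inl : Fin k → Fin k ⊕ V) := Isometry.of_dist_eq fun x y => rfl
  have isomR : Isometry (Sum.inr : V → Fin k ⊕ V) := Isometry.of_dist_eq fun x y => rfl
  refine (ghDist_le_hausdorffDist isomL isomR).trans ?_
  apply hausdorffDist_le_of_mem_dist hc.le
  · rintro _ ⟨i, rfl⟩
    refine ⟨Sum.inr (hR1 i).choose, Set.mem_range_self _, ?_⟩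
    have := glueDist_glued_points (Z := Z) Φ Ψ c ⟨(i, (hR1 i).choose), (hR1 i).choose_spec⟩
    exact le_of_eq this
  · rintro _ ⟨v, rfl⟩
    refine ⟨Sum.inl (hR2 v).choose, Set.mem_range_self _, ?_⟩
    have := glueDist_glued_points (Z := Z) Φ Ψ c ⟨((hR2 v).choose, v), (hR2 v).choose_spec⟩
    calc dist (Sum.inr v : Fin k ⊕ V) (Sum.inl (hR2 v).choose)
        = dist (Sum.inl (hR2 v).choose : Fin k ⊕ V) (Sum.inr v) := dist_comm _ _
      _ ≤ c := le_of_eq this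

/-- Lower bound: if `ghSimplex < b/2` then `V` maps to `Fin k` with fibers of diameter `< b`. -/
lemma exists_fiber_map_of_ghSimplex_lt {V : Type*} [MetricSpace V] [Fintype V] [Nonempty V]
    (a : ℝ) (ha : 0 < a) (k : ℕ) (hk : 0 < k) (b : ℝ)
    (h : ghSimplex a ha k V < b / 2) :
    ∃ g : V → Fin k, ∀ v w, g v = g w → dist v w < b := by
  rw [ghSimplex_eq_ghDist a ha hk] at h
  letI := simplexMet a ha k
  haveI : Nonempty (Fin k) := Fin.pos_iff_nonempty.mp hk
  obtain ⟨Φ, Ψ, hΦ, hΨ, heq⟩ := ghDist_eq_hausdorffDist (Fin k) V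
  have hcomp : IsCompact (Set.range Φ) := (Set.finite_range Φ).isCompact
  have hcompΨ : IsCompact (Set.range Ψ) := (Set.finite_range Ψ).isCompact
  have hne : (Set.range Φ).Nonempty := Set.range_nonempty _
  have hfin : EMetric.hausdorffEdist (Set.range Ψ) (Set.range Φ) ≠ ⊤ :=
    hausdorffEdist_ne_top_of_nonempty_of_bounded (Set.range_nonempty _) hne
      hcompΨ.isBounded hcomp.isBounded
  have key : ∀ v : V, ∃ i : Fin k, dist (Ψ v) (Φ i) < b / 2 := by
    intro v
    obtain ⟨y, hy, hyd⟩ := hcomp.exists_infDist_eq_dist hne (Ψ v)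
    obtain ⟨i, rfl⟩ := hy
    refine ⟨i, ?_⟩
    rw [← hyd]
    calc infDist (Ψ v) (Set.range Φ) ≤ hausdorffDist (Set.range Ψ) (Set.range Φ) :=
          infDist_le_hausdorffDist_of_mem (Set.mem_range_self v) hfin
      _ = hausdorffDist (Set.range Φ) (Set.range Ψ) := hausdorffDist_comm ..
      _ < b / 2 := by rw [← heq]; exact h
  choose g hg using key
  refine ⟨g, fun v w hvw => ?_⟩
  have h1 := hg v
  have h2 := hg w
  rw [hvw] at h1
  have hΨd : dist v w = dist (Ψ v) (Ψ w) := (hΨ.dist_eq v w).symm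
  rw [hΨd]
  calc dist (Ψ v) (Ψ w) ≤ dist (Ψ v) (Φ (g w)) + dist (Φ (g w)) (Ψ w) := dist_triangle _ _ _
    _ < b / 2 + b / 2 := by rw [dist_comm (Φ (g w)) (Ψ w)]; linarith
    _ = b := by ring

/-- let `G` be a finite simple graph on a nonempty vertex set `V`, fix
`0 < a < b ≤ 2a`, and let the metric on `V` assign distance `a` to adjacent vertices and
`b` to distinct non-adjacent vertices.  If `m` is the greatest positive integer `k` with
`2 d_GH(aΔ_k, V) = b` (and `m = 0` if no such `k` exists), then the clique cover number of
`G` equals `m + 1`. -/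
theorem cliqueCoverNumber_eq_greatest_add_one
    {V : Type*} [Fintype V] [Nonempty V] (G : SimpleGraph V)
    (a b : ℝ) (ha : 0 < a) (hab : a < b) (hb : b ≤ 2 * a)
    [MetricSpace V]
    (hadj : ∀ x y : V, G.Adj x y → dist x y = a)
    (hnadj : ∀ x y : V, x ≠ y → ¬ G.Adj x y → dist x y = b)
    (m : ℕ)
    (hm : IsGreatest {k : ℕ | 0 < k ∧ 2 * ghSimplex a ha k V = b} m ∨
      (m = 0 ∧ {k : ℕ | 0 < k ∧ 2 * ghSimplex a ha k V = b} = ∅)) :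
    cliqueCoverNumber G = m + 1 := by
  classical
  set A := {n : ℕ | ∃ f : Fin n → Set V, (∀ i, G.IsClique (f i)) ∧ (⋃ i, f i) = Set.univ}
    with hAdef
  have hcard : Fintype.card V ∈ A := by
    refine ⟨fun i => {(Fintype.equivFin V).symm i},
      fun i => G.isClique_iff.mpr (Set.pairwise_singleton _ _), ?_⟩
    ext v
    simp only [Set.mem_iUnion, Set.mem_singleton_iff, Set.mem_univ, iff_true]
    exact ⟨Fintype.equivFin V v, by simp⟩
  have hAne : A.Nonempty := ⟨_, hcard⟩
  have hθmem : cliqueCoverNumber G ∈ A := Nat.sInf_mem hAne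
  set θ := cliqueCoverNumber G with hθdef
  obtain ⟨f, hfc, hfu⟩ := hθmem
  have hθpos : 0 < θ := by
    obtain ⟨v⟩ := (inferInstance : Nonempty V)
    have hv : v ∈ ⋃ i, f i := hfu ▸ Set.mem_univ v
    obtain ⟨i, -⟩ := Set.mem_iUnion.mp hv
    exact i.pos
  have hdb : ∀ v w : V, dist v w ≤ b := by
    intro v w
    rcases eq_or_ne v w with rfl | hne
    · rw [dist_self]; linarith
    · by_cases hadj' : G.Adj v w
      · rw [hadj v w hadj']; linarith
      · exact le_of_eq (hnadj v w hne hadj')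
  have hd2a : ∀ v w : V, dist v w ≤ 2 * a := fun v w => (hdb v w).trans hb
  -- Fact A : for k ≥ θ, 2 * ghSimplex ≤ a
  have factA : ∀ k, θ ≤ k → 2 * ghSimplex a ha k V ≤ a := by
    intro k hθk
    have hk : 0 < k := lt_of_lt_of_le hθpos hθk
    have hgex : ∀ v : V, ∃ i : Fin θ, v ∈ f i := fun v =>
      Set.mem_iUnion.mp (hfu ▸ Set.mem_univ v)
    choose g hg using hgex
    set g' : V → Fin k := fun v => Fin.castLE hθk (g v) with hg'def
    set c : Fin k → V := fun i =>
      if h : ∃ v, g' v = i then h.choose else Classical.arbitrary V with hcdef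
    have hc : ∀ i, (∃ v : V, g' v = i) → g' (c i) = i := by
      intro i h
      simp only [hcdef, dif_pos h]
      exact h.choose_spec
    set R : Fin k → V → Prop := fun i v => g' v = i ∨ v = c i with hRdef
    have key : ∀ (v w : V), g' v = g' w → dist v w ≤ a := by
      intro v w hvw
      have hgv : g v = g w := Fin.castLE_injective hθk hvw
      rcases eq_or_ne v w with rfl | hne
      · rw [dist_self]; linarith
      · have hadj' : G.Adj v w :=
          G.isClique_iff.mp (hfc (g v)) (hg v) (by rw [hgv]; exact hg w) hne
        exact le_of_eq (hadj v w hadj')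
    have hfib : ∀ i (v w : V), R i v → R i w → dist v w ≤ a := by
      intro i v w hv hw
      rcases hv with hv | rfl
      · rcases hw with hw | rfl
        · exact key v w (hv.trans hw.symm)
        · exact key v _ (hv.trans (hc i ⟨v, hv⟩).symm)
      · rcases hw with hw | rfl
        · exact key _ w ((hc i ⟨w, hw⟩).trans hw.symm)
        · rw [dist_self]; linarith
    have hle := ghSimplex_le_of_rel (V := V) a ha k hk (a / 2) (by linarith) R
      (fun i => ⟨c i, Or.inr rfl⟩) (fun v => ⟨g' v, Or.inl rfl⟩)
      (fun i j v w hiv hjw hij => by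
        rw [abs_le]
        constructor
        · have := hd2a v w; linarith
        · have := dist_nonneg (x := v) (y := w); linarith)
      (fun i v w hiv hiw => by have := hfib i v w hiv hiw; linarith)
    linarith
  -- Fact B : if 2 * ghSimplex < b and k > 0 then θ ≤ k
  have factB : ∀ k, 0 < k → 2 * ghSimplex a ha k V < b → θ ≤ k := by
    intro k hk hlt
    obtain ⟨g, hg⟩ := exists_fiber_map_of_ghSimplex_lt (V := V) a ha k hk b (by linarith)
    have hkA : k ∈ A := by
      refine ⟨fun i => {v | g v = i}, fun i => G.isClique_iff.mpr ?_, ?_⟩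
      · intro v hv w hw hne
        by_contra hnadj'
        have h1 := hnadj v w hne hnadj'
        have h2 := hg v w (hv.trans hw.symm)
        linarith
      · ext v
        simp only [Set.mem_iUnion, Set.mem_setOf_eq, Set.mem_univ, iff_true]
        exact ⟨g v, rfl⟩
    exact Nat.sInf_le hkA
  -- Fact C : 2 * ghSimplex ≤ b always (for k > 0)
  have factC : ∀ k, 0 < k → 2 * ghSimplex a ha k V ≤ b := by
    intro k hk
    have hle := ghSimplex_le_of_rel (V := V) a ha k hk (b / 2) (by linarith)
      (fun _ _ => True) (fun i => ⟨Classical.arbitrary V, trivial⟩)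
      (fun v => ⟨⟨0, hk⟩, trivial⟩)
      (fun i j v w _ _ _ => by
        rw [abs_le]
        constructor
        · have := hdb v w; linarith
        · have := dist_nonneg (x := v) (y := w); linarith)
      (fun i v w _ _ => by have := hdb v w; linarith)
    linarith
  -- characterization of the set S
  have hS : {k : ℕ | 0 < k ∧ 2 * ghSimplex a ha k V = b} = {k : ℕ | 0 < k ∧ k < θ} := by
    ext k
    simp only [Set.mem_setOf_eq]
    constructor
    · rintro ⟨hk, heq⟩
      refine ⟨hk, ?_⟩
      by_contra hkθ
      push_neg at hkθ
      have := factA k hkθ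
      linarith
    · rintro ⟨hk, hkθ⟩
      refine ⟨hk, ?_⟩
      have hle := factC k hk
      rcases lt_or_eq_of_le hle with hlt | heq
      · exact absurd (factB k hk hlt) (by omega)
      · exact heq
  rcases hm with hgr | ⟨hm0, hSe⟩
  · rw [hS] at hgr
    obtain ⟨⟨hmpos, hmθ⟩, hub⟩ := hgr
    have h1 : θ - 1 ≤ m := hub ⟨by omega, by omega⟩
    omega
  · rw [hS] at hSe
    have hθ1 : θ = 1 := by
      by_contra hne
      have h2 : 2 ≤ θ := by omega
      have h1 : (1 : ℕ) ∈ {k : ℕ | 0 < k ∧ k < θ} := ⟨one_pos, by omega⟩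
      rw [hSe] at h1
      exact h1
    omega
end

section
/- Let G = (V,E) be a finite simple graph with nonempty vertex set, and fix real numbers a, b with 0 < a < b ≤ 2a. Equip V with the metric d in which d(x,y) = b for adjacent vertices x, y, and d(x,y) = a for distinct nonadjacent vertices. Let m be the greatest positive integer k such that 2·d_GH(aΔ_k, V) = b, and set m = 0 if no such k exists. Then the chromatic number γ(G) equals m + 1. -/
open GromovHausdorff Metric
open Set

section Glue
variable {X Y : Type*} [MetricSpace X] [MetricSpace Y]

/-- Distance on `X ⊕ Y` extending the two metrics with cross distances `D`. -/
def myGlueDist (D : X → Y → ℝ) : X ⊕ Y → X ⊕ Y → ℝ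
  | .inl i, .inl j => dist i j
  | .inl i, .inr x => D i x
  | .inr x, .inl i => D i x
  | .inr x, .inr y => dist x y

/-- Metric on the sum, given suitable cross distances. -/
def myGlueMetric (D : X → Y → ℝ)
    (hpos : ∀ i x, 0 < D i x)
    (hXX : ∀ i j x, dist i j ≤ D i x + D j x)
    (hYY : ∀ i x y, dist x y ≤ D i x + D i y)
    (hDX : ∀ i j x, D i x ≤ dist i j + D j x)
    (hDY : ∀ i x y, D i x ≤ D i y + dist y x) : MetricSpace (X ⊕ Y) where
  dist := myGlueDist D
  dist_self p := by cases p <;> simp [myGlueDist]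
  dist_comm p q := by
    rcases p with i | x <;> rcases q with j | y <;> simp [myGlueDist, dist_comm]
  dist_triangle p q r := by
    rcases p with i | x <;> rcases q with j | y <;> rcases r with l | z <;>
      simp only [myGlueDist]
    · exact dist_triangle _ _ _
    · exact hDX i j z
    · exact hXX i l y
    · exact hDY i z y
    · calc D l x ≤ dist l j + D j x := hDX l j x
        _ = D j x + dist j l := by rw [dist_comm]; ring
    · exact hYY j x z
    · calc D l x ≤ D l y + dist y x := hDY l x y
        _ = dist x y + D l y := by rw [dist_comm]; ring
    · exact dist_triangle _ _ _
  eq_of_dist_eq_zero := by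
    intro p q h
    rcases p with i | x <;> rcases q with j | y <;> simp only [myGlueDist] at h
    · rw [eq_of_dist_eq_zero h]
    · exact absurd h (ne_of_gt (hpos i y))
    · exact absurd h (ne_of_gt (hpos j x))
    · rw [eq_of_dist_eq_zero h]

/-- Upper bound on the Gromov–Hausdorff distance from a cross-distance function. -/
theorem myGhDist_le {X Y : Type*} [MetricSpace X] [CompactSpace X] [Nonempty X]
    [MetricSpace Y] [CompactSpace Y] [Nonempty Y] [Finite X] [Finite Y]
    (D : X → Y → ℝ) (r : ℝ) (hr : 0 ≤ r)
    (hpos : ∀ i x, 0 < D i x)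
    (hXX : ∀ i j x, dist i j ≤ D i x + D j x)
    (hYY : ∀ i x y, dist x y ≤ D i x + D i y)
    (hDX : ∀ i j x, D i x ≤ dist i j + D j x)
    (hDY : ∀ i x y, D i x ≤ D i y + dist y x)
    (hdense1 : ∀ i, ∃ x, D i x ≤ r)
    (hdense2 : ∀ x, ∃ i, D i x ≤ r) :
    ghDist X Y ≤ r := by
  letI M : MetricSpace (X ⊕ Y) := myGlueMetric D hpos hXX hYY hDX hDY
  have hl : Isometry (Sum.inl : X → X ⊕ Y) := Isometry.of_dist_eq fun _ _ => rfl
  have hrt : Isometry (Sum.inr : Y → X ⊕ Y) := Isometry.of_dist_eq fun _ _ => rfl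
  refine le_trans (ghDist_le_hausdorffDist hl hrt) ?_
  apply hausdorffDist_le_of_mem_dist hr
  · rintro p ⟨i, rfl⟩
    obtain ⟨x, hx⟩ := hdense1 i
    exact ⟨Sum.inr x, mem_range_self x, hx⟩
  · rintro p ⟨x, rfl⟩
    obtain ⟨i, hi⟩ := hdense2 x
    refine ⟨Sum.inl i, mem_range_self i, ?_⟩
    show D i x ≤ r
    exact hi
end Glue

set_option linter.unusedSectionVars false

section Key
open scoped Classical
variable {V : Type*} [Fintype V] [Nonempty V] (G : SimpleGraph V)
    (a b : ℝ) (ha : 0 < a) (hab : a < b) (hb : b ≤ 2 * a)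
    [MetricSpace V]
    (hadj : ∀ x y : V, G.Adj x y → dist x y = b)
    (hnadj : ∀ x y : V, x ≠ y → ¬ G.Adj x y → dist x y = a)

theorem simplex_dist_eq (k : ℕ) (i j : Fin k) :
    @dist _ (simplexMet a ha k).toDist i j = if i = j then 0 else a := rfl

include ha hadj hnadj hab hb in
theorem distV_le (x y : V) : dist x y ≤ b := by
  rcases eq_or_ne x y with rfl | hxy
  · simp; linarith
  by_cases h : G.Adj x y
  · exact (hadj x y h).le
  · rw [hnadj x y hxy h]; linarith

include ha hb hadj hnadj hab in
theorem le_distV (x y : V) (hxy : x ≠ y) : a ≤ dist x y := by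
  by_cases h : G.Adj x y
  · rw [hadj x y h]; linarith
  · rw [hnadj x y hxy h]

include hadj hnadj hab hb in
/-- Upper bound `2 d_GH ≤ b` for every `k > 0`. -/
theorem two_gh_le_b (k : ℕ) (hk : 0 < k) : 2 * ghSimplex a ha k V ≤ b := by
  have hb0 : (0:ℝ) ≤ b/2 := by linarith
  rw [ghSimplex, dif_pos hk]
  letI := simplexMet a ha k
  haveI : Nonempty (Fin k) := Fin.pos_iff_nonempty.mp hk
  have : ghDist (Fin k) V ≤ b/2 := by
    apply myGhDist_le (fun _ _ => b/2) (b/2) hb0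
    · intro i x; linarith
    · intro i j x
      rw [simplex_dist_eq]
      split <;> linarith
    · intro i x y
      have := distV_le G a b ha hab hb hadj hnadj x y
      linarith
    · intro i j x
      have : (0:ℝ) ≤ dist i j := dist_nonneg
      linarith
    · intro i x y
      have : (0:ℝ) ≤ dist y x := dist_nonneg
      linarith
    · intro i; exact ⟨Classical.arbitrary V, le_refl _⟩
    · intro x; exact ⟨Classical.arbitrary (Fin k), le_refl _⟩
  linarith

include hadj hnadj hab hb in
/-- Upper bound `2 d_GH ≤ a` when `G` is `k`-colorable, `k > 0`. -/
theorem two_gh_le_a (k : ℕ) (hk : 0 < k) (hc : G.Colorable k) :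
    2 * ghSimplex a ha k V ≤ a := by
  have ha0 : (0:ℝ) ≤ a/2 := by linarith
  obtain ⟨C⟩ := hc
  obtain ⟨x₀⟩ := ‹Nonempty V›
  -- the correspondence
  set R : Fin k → V → Prop := fun i x => C x = i ∨ ((∀ y, C y ≠ i) ∧ x = x₀) with hR
  set D : Fin k → V → ℝ := fun i x => if R i x then a/2 else b - a/2 with hD
  have Dpos : ∀ i x, R i x → D i x = a/2 := by
    intro i x h; simp only [hD]; rw [if_pos h]
  have Dneg : ∀ i x, ¬ R i x → D i x = b - a/2 := by
    intro i x h; simp only [hD]; rw [if_neg h]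
  have hDge : ∀ i x, a/2 ≤ D i x := by
    intro i x
    by_cases h : R i x
    · rw [Dpos i x h]
    · rw [Dneg i x h]; linarith
  have hDle : ∀ i x, D i x ≤ b - a/2 := by
    intro i x
    by_cases h : R i x
    · rw [Dpos i x h]; linarith
    · rw [Dneg i x h]
  rw [ghSimplex, dif_pos hk]
  letI := simplexMet a ha k
  haveI : Nonempty (Fin k) := Fin.pos_iff_nonempty.mp hk
  have : ghDist (Fin k) V ≤ a/2 := by
    apply myGhDist_le D (a/2) ha0
    · intro i x
      have := hDge i x; linarith
    · -- dist i j ≤ D i x + D j x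
      intro i j x
      rw [simplex_dist_eq]
      have h1 := hDge i x; have h2 := hDge j x
      split <;> linarith
    · -- dist x y ≤ D i x + D i y
      intro i x y
      rcases eq_or_ne x y with rfl | hxy
      · have h1 := hDge i x; simp; linarith
      by_cases hAdj : G.Adj x y
      · -- adjacent: x, y can't both be in class i
        rw [hadj x y hAdj]
        have hnot : ¬ (R i x ∧ R i y) := by
          rintro ⟨hx, hy⟩
          simp only [hR] at hx hy
          rcases hx with hx | ⟨hun, rfl⟩
          · rcases hy with hy | ⟨hun, rfl⟩
            · exact C.valid hAdj (hx.trans hy.symm)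
            · exact hun _ hx
          · rcases hy with hy | ⟨_, rfl⟩
            · exact hun _ hy
            · exact hxy rfl
        by_cases hx : R i x
        · rw [Dpos i x hx, Dneg i y (fun hy => hnot ⟨hx, hy⟩)]; linarith
        · rw [Dneg i x hx]
          have := hDge i y; linarith
      · rw [hnadj x y hxy hAdj]
        have h1 := hDge i x; have h2 := hDge i y
        linarith
    · -- D i x ≤ dist i j + D j x
      intro i j x
      have h2 := hDge j x
      have hd : (0:ℝ) ≤ @dist _ (simplexMet a ha k).toDist i j := by
        rw [simplex_dist_eq]; split <;> linarith
      by_cases hx : R i x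
      · rw [Dpos i x hx]; linarith
      · rw [Dneg i x hx]
        by_cases hjx : R j x
        · have hij : i ≠ j := fun h => hx (h ▸ hjx)
          rw [simplex_dist_eq, if_neg hij, Dpos j x hjx]; linarith
        · rw [Dneg j x hjx]; linarith
    · -- D i x ≤ D i y + dist y x
      intro i x y
      have hd : (0:ℝ) ≤ dist y x := dist_nonneg
      by_cases hx : R i x
      · rw [Dpos i x hx]
        have := hDge i y; linarith
      · rw [Dneg i x hx]
        by_cases hy : R i y
        · rw [Dpos i y hy]
          have hyx : y ≠ x := fun h => hx (h ▸ hy)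
          have := le_distV G a b ha hab hb hadj hnadj y x hyx
          linarith
        · rw [Dneg i y hy]; linarith
    · -- density on the simplex side
      intro i
      by_cases h : ∃ y, C y = i
      · obtain ⟨y, hy⟩ := h
        exact ⟨y, le_of_eq (Dpos i y (Or.inl hy))⟩
      · push_neg at h
        exact ⟨x₀, le_of_eq (Dpos i x₀ (Or.inr ⟨h, rfl⟩))⟩
    · intro x
      exact ⟨C x, le_of_eq (Dpos (C x) x (Or.inl rfl))⟩
  linarith

include hadj in
/-- Lower bound: if `2 d_GH < b` then `G` is `k`-colorable. -/
theorem colorable_of_two_gh_lt_b (k : ℕ) (hk : 0 < k)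
    (h : 2 * ghSimplex a ha k V < b) : G.Colorable k := by
  rw [ghSimplex, dif_pos hk] at h
  letI := simplexMet a ha k
  haveI : Nonempty (Fin k) := Fin.pos_iff_nonempty.mp hk
  set Φ := optimalGHInjl (Fin k) V with hΦ
  set Ψ := optimalGHInjr (Fin k) V with hΨ
  have hIΦ : Isometry Φ := isometry_optimalGHInjl (Fin k) V
  have hIΨ : Isometry Ψ := isometry_optimalGHInjr (Fin k) V
  have hopt : hausdorffDist (range Φ) (range Ψ) = ghDist (Fin k) V :=
    hausdorffDist_optimal
  have hcΦ : IsCompact (range Φ) := (Set.finite_range Φ).isCompact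
  have hcΨ : IsCompact (range Ψ) := (Set.finite_range Ψ).isCompact
  have hfin : EMetric.hausdorffEdist (range Ψ) (range Φ) ≠ ⊤ :=
    hausdorffEdist_ne_top_of_nonempty_of_bounded (range_nonempty _)
      (range_nonempty _) hcΨ.isBounded hcΦ.isBounded
  have key : ∀ x : V, ∃ i : Fin k, dist (Ψ x) (Φ i) ≤ ghDist (Fin k) V := by
    intro x
    obtain ⟨p, hp, hpd⟩ := hcΦ.exists_infDist_eq_dist (range_nonempty _) (Ψ x)
    obtain ⟨i, rfl⟩ := hp
    refine ⟨i, ?_⟩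
    rw [← hpd, ← hopt, hausdorffDist_comm]
    exact infDist_le_hausdorffDist_of_mem (mem_range_self x) hfin
  choose c hc using key
  refine ⟨SimpleGraph.Coloring.mk c ?_⟩
  intro x y hAdj hcxy
  have h1 := hc x
  have h2 := hc y
  rw [hcxy] at h1
  have hd : dist (Ψ x) (Ψ y) = b := by rw [hIΨ.dist_eq, hadj x y hAdj]
  have := dist_triangle (Ψ x) (Φ (c y)) (Ψ y)
  rw [hd, dist_comm (Φ (c y)) (Ψ y)] at this
  linarith

end Key

/-- let `G` be a finite simple graph on a nonempty vertex set `V`, fix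
`0 < a < b ≤ 2a`, and let the metric on `V` assign distance `b` to adjacent vertices and
`a` to distinct non-adjacent vertices.  If `m` is the greatest positive integer `k` with
`2 d_GH(aΔ_k, V) = b` (and `m = 0` if no such `k` exists), then the chromatic number of `G`
equals `m + 1`. -/
theorem chromaticNumber_eq_greatest_add_one
    {V : Type*} [Fintype V] [Nonempty V] (G : SimpleGraph V)
    (a b : ℝ) (ha : 0 < a) (hab : a < b) (hb : b ≤ 2 * a)
    [MetricSpace V]
    (hadj : ∀ x y : V, G.Adj x y → dist x y = b)
    (hnadj : ∀ x y : V, x ≠ y → ¬ G.Adj x y → dist x y = a)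
    (m : ℕ)
    (hm : IsGreatest {k : ℕ | 0 < k ∧ 2 * ghSimplex a ha k V = b} m ∨
      (m = 0 ∧ {k : ℕ | 0 < k ∧ 2 * ghSimplex a ha k V = b} = ∅)) :
    G.chromaticNumber = ((m + 1 : ℕ) : ℕ∞) := by
  classical
  have hchar : ∀ k : ℕ, 0 < k → (2 * ghSimplex a ha k V = b ↔ ¬ G.Colorable k) := by
    intro k hk
    constructor
    · intro he hc
      have := two_gh_le_a G a b ha hab hb hadj hnadj k hk hc
      linarith
    · intro hc
      have hle := two_gh_le_b G a b ha hab hb hadj hnadj k hk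
      rcases lt_or_eq_of_le hle with hlt | he
      · exact absurd (colorable_of_two_gh_lt_b G a b ha hadj k hk hlt) hc
      · exact he
  have hS : {k : ℕ | 0 < k ∧ 2 * ghSimplex a ha k V = b}
      = {k : ℕ | 0 < k ∧ ¬ G.Colorable k} := by
    ext k
    simp only [Set.mem_setOf_eq]
    exact ⟨fun ⟨hk, he⟩ => ⟨hk, (hchar k hk).mp he⟩,
      fun ⟨hk, hc⟩ => ⟨hk, (hchar k hk).mpr hc⟩⟩
  rcases hm with hg | ⟨rfl, hempty⟩
  · rw [hS] at hg
    obtain ⟨⟨hm0, hmnc⟩, hub⟩ := hg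
    have hcol : G.Colorable (m + 1) := by
      by_contra hnc
      have : m + 1 ≤ m := hub ⟨Nat.succ_pos m, hnc⟩
      omega
    have h1 : G.chromaticNumber ≤ ((m + 1 : ℕ) : ℕ∞) :=
      SimpleGraph.chromaticNumber_le_iff_colorable.mpr hcol
    have h2 : ¬ (G.chromaticNumber ≤ (m : ℕ)) := fun h =>
      hmnc (SimpleGraph.chromaticNumber_le_iff_colorable.mp h)
    have h3 : ((m : ℕ) : ℕ∞) < G.chromaticNumber := lt_of_not_ge h2
    refine le_antisymm h1 ?_
    have h4 := Order.add_one_le_of_lt h3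
    have : ((m + 1 : ℕ) : ℕ∞) = ((m : ℕ) : ℕ∞) + 1 := by push_cast; ring
    rw [this]
    exact h4
  · have h1col : G.Colorable 1 := by
      by_contra h
      have hmem : (1 : ℕ) ∈ {k : ℕ | 0 < k ∧ 2 * ghSimplex a ha k V = b} :=
        ⟨one_pos, (hchar 1 one_pos).mpr h⟩
      rw [hempty] at hmem
      exact hmem
    have h1 : G.chromaticNumber ≤ ((1 : ℕ) : ℕ∞) :=
      SimpleGraph.chromaticNumber_le_iff_colorable.mpr h1col
    have h2 : 0 < G.chromaticNumber := SimpleGraph.chromaticNumber_pos h1col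
    have h3 : (1 : ℕ∞) ≤ G.chromaticNumber := ENat.one_le_iff_ne_zero.mpr h2.ne'
    have : ((0 + 1 : ℕ) : ℕ∞) = 1 := by norm_num
    rw [this]
    exact le_antisymm (by simpa using h1) h3
end

section
/- Let G = (V,E) be a finite simple graph with nonempty vertex set, and fix real numbers a, b with 0 < a < b ≤ 2a. Equip V with the metric d in which d(x,y) = b for adjacent vertices x, y, and d(x,y) = a for distinct nonadjacent vertices. If for a positive integer k one has 2·d_GH(aΔ_k, V) = b, then the chromatic number γ(G) satisfies γ(G) > k. -/
set_option maxHeartbeats 1600000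

open GromovHausdorff Metric

/-- let `G` be a finite simple graph on a nonempty vertex set `V`, fix
`0 < a < b ≤ 2a`, and let the metric on `V` assign distance `b` to adjacent vertices and
`a` to distinct non-adjacent vertices.  If for a positive integer `k` one has
`2 d_GH(aΔ_k, V) = b`, then the chromatic number of `G` is greater than `k`. -/
theorem chromaticNumber_gt_of_ghDist_eq
    {V : Type*} [Fintype V] [Nonempty V] (G : SimpleGraph V)
    (a b : ℝ) (ha : 0 < a) (hab : a < b) (hb : b ≤ 2 * a)
    [MetricSpace V]
    (hadj : ∀ x y : V, G.Adj x y → dist x y = b)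
    (hnadj : ∀ x y : V, x ≠ y → ¬ G.Adj x y → dist x y = a)
    (k : ℕ) (hk : 0 < k)
    (hgh : 2 * ghSimplex a ha k V = b) :
    (k : ℕ∞) < G.chromaticNumber := by
  classical
  by_contra hlt
  push_neg at hlt
  have hcol : G.Colorable k := (SimpleGraph.chromaticNumber_le_iff_colorable).mp hlt
  obtain ⟨C⟩ := hcol
  obtain ⟨v₀⟩ := ‹Nonempty V›
  letI Mk := simplexMet a ha k
  haveI : Nonempty (Fin k) := Fin.pos_iff_nonempty.mp hk
  -- basic facts about the metric on V
  have hdb : ∀ v w : V, dist v w ≤ b := by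
    intro v w
    by_cases hvw : v = w
    · subst hvw; simp; linarith
    · by_cases hA : G.Adj v w
      · rw [hadj _ _ hA]
      · rw [hnadj _ _ hvw hA]; linarith
  have hda : ∀ v w : V, v ≠ w → a ≤ dist v w := by
    intro v w hvw
    by_cases hA : G.Adj v w
    · rw [hadj _ _ hA]; linarith
    · rw [hnadj _ _ hvw hA]
  -- the relation
  set S : Fin k → V → Prop := fun i v => C v = i ∨ (v = v₀ ∧ ∀ w, C w ≠ i) with hSdef
  have hSC : ∀ v : V, S (C v) v := fun v => Or.inl rfl
  have hex : ∀ i : Fin k, ∃ v, S i v := by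
    intro i
    by_cases h : ∃ v, C v = i
    · obtain ⟨v, hv⟩ := h; exact ⟨v, Or.inl hv⟩
    · exact ⟨v₀, Or.inr ⟨rfl, fun w hw => h ⟨w, hw⟩⟩⟩
  have hS : ∀ (i : Fin k) (v w : V), S i v → S i w → dist v w ≤ a := by
    intro i v w hv hw
    rcases hv with hv | ⟨hv, hv'⟩
    · rcases hw with hw | ⟨hw, hw'⟩
      · by_cases hvw : v = w
        · subst hvw; simp; linarith
        · have : ¬ G.Adj v w := fun hA => C.valid hA (hv.trans hw.symm)
          rw [hnadj _ _ hvw this]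
      · exact absurd hv (hw' v)
    · rcases hw with hw | ⟨hw, hw'⟩
      · exact absurd hw (hv' w)
      · subst hv; subst hw; simp; linarith
  -- the glued metric space
  letI MZ : MetricSpace (Sum (Fin k) V) :=
    { dist := fun x y => match x, y with
        | .inl i, .inl j => if i = j then 0 else a
        | .inr v, .inr w => dist v w
        | .inl i, .inr v => if S i v then a/2 else b - a/2
        | .inr v, .inl i => if S i v then a/2 else b - a/2
      dist_self := fun x => by rcases x with i | v <;> simp
      dist_comm := fun x y => by
        rcases x with i | v <;> rcases y with j | w <;> simp [dist_comm, eq_comm]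
      dist_triangle := fun x y z => by
        have h1 : a/2 ≤ b - a/2 := by linarith
        have h2 : b - a/2 ≤ a + a/2 := by linarith
        rcases x with i | v <;> rcases y with j | w <;> rcases z with l | u
        · show (if i = l then 0 else a) ≤ (if i = j then 0 else a) + (if j = l then 0 else a)
          split_ifs <;> simp_all <;> linarith
        · show (if S i u then _ else _) ≤ (if i = j then 0 else a) + (if S j u then _ else _)
          rcases eq_or_ne i j with rfl | hij
          · simp
          · rw [if_neg hij]; split_ifs <;> linarith
        · show (if i = l then 0 else a) ≤ (if S i w then _ else _) + (if S l w then _ else _)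
          split_ifs <;> simp_all <;> linarith
        · show (if S i u then _ else _) ≤ (if S i w then _ else _) + dist w u
          have h0 : (0:ℝ) ≤ dist w u := dist_nonneg
          by_cases hiu : S i u
          · rw [if_pos hiu]; split_ifs <;> linarith
          · rw [if_neg hiu]
            by_cases hiw : S i w
            · rw [if_pos hiw]
              have hwu : w ≠ u := fun h => hiu (h ▸ hiw)
              have := hda w u hwu
              linarith
            · rw [if_neg hiw]; linarith
        · show (if S l v then _ else _) ≤ (if S j v then _ else _) + (if j = l then 0 else a)
          rcases eq_or_ne j l with rfl | hjl
          · simp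
          · rw [if_neg hjl]; split_ifs <;> linarith
        · show dist v u ≤ (if S j v then _ else _) + (if S j u then _ else _)
          by_cases hv : S j v
          · by_cases hu : S j u
            · rw [if_pos hv, if_pos hu]
              have := hS j v u hv hu; linarith
            · rw [if_pos hv, if_neg hu]
              have := hdb v u; linarith
          · rw [if_neg hv]
            have := hdb v u
            split_ifs <;> linarith
        · show (if S l v then _ else _) ≤ dist v w + (if S l w then _ else _)
          have h0 : (0:ℝ) ≤ dist v w := dist_nonneg
          by_cases hlv : S l v
          · rw [if_pos hlv]; split_ifs <;> linarith
          · rw [if_neg hlv]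
            by_cases hlw : S l w
            · rw [if_pos hlw]
              have hvw : v ≠ w := fun h => hlv (h ▸ hlw)
              have := hda v w hvw
              linarith
            · rw [if_neg hlw]; linarith
        · exact dist_triangle v w u
      eq_of_dist_eq_zero := by
        intro x y h
        rcases x with i | v <;> rcases y with j | w
        · simp only at h
          split_ifs at h with hij
          · exact hij ▸ rfl
          · exact absurd h (ne_of_gt ha)
        · simp only at h; split_ifs at h <;> linarith
        · simp only at h; split_ifs at h <;> linarith
        · exact congrArg Sum.inr (eq_of_dist_eq_zero h) }
  have hIl : Isometry (Sum.inl : Fin k → Sum (Fin k) V) :=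
    Isometry.of_dist_eq fun i j => rfl
  have hIr : Isometry (Sum.inr : V → Sum (Fin k) V) :=
    Isometry.of_dist_eq fun v w => rfl
  have hH : hausdorffDist (Set.range (Sum.inl : Fin k → Sum (Fin k) V))
      (Set.range (Sum.inr : V → Sum (Fin k) V)) ≤ a/2 := by
    apply hausdorffDist_le_of_mem_dist (by positivity)
    · rintro x ⟨i, rfl⟩
      obtain ⟨v, hv⟩ := hex i
      refine ⟨Sum.inr v, ⟨v, rfl⟩, ?_⟩
      show (if S i v then a/2 else b - a/2) ≤ a/2
      rw [if_pos hv]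
    · rintro y ⟨v, rfl⟩
      refine ⟨Sum.inl (C v), ⟨C v, rfl⟩, ?_⟩
      show (if S (C v) v then a/2 else b - a/2) ≤ a/2
      rw [if_pos (hSC v)]
  have hgh' : ghDist (Fin k) V ≤ a/2 :=
    le_trans (ghDist_le_hausdorffDist hIl hIr) hH
  rw [ghSimplex, dif_pos hk] at hgh
  linarith [hgh, hgh']
end

section
/- Let Y be a finite metric space with n ≥ 1 points all of whose nonzero distances take values in {a, b}, where 0 < a < b ≤ 2a. Then for every positive integer m one has 2·d_GH(aΔ_m, Y) ≤ b, and if moreover m ≥ n, then 2·d_GH(aΔ_m, Y) < b. -/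
open GromovHausdorff Metric

/-- Metric on the disjoint union of two spaces of diameter `≤ 2c`, with constant
cross-distance `c`. -/
noncomputable def crossMet (X Y : Type*) [MetricSpace X] [MetricSpace Y]
    (c : ℝ) (hc : 0 < c) (hX : ∀ x x' : X, dist x x' ≤ 2 * c)
    (hY : ∀ y y' : Y, dist y y' ≤ 2 * c) : MetricSpace (X ⊕ Y) where
  dist p q := match p, q with
    | .inl x, .inl x' => dist x x'
    | .inr y, .inr y' => dist y y'
    | _, _ => c
  dist_self p := by cases p <;> simp
  dist_comm p q := by cases p <;> cases q <;> simp [dist_comm]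
  dist_triangle p q r := by
    rcases p with x | x <;> rcases q with y | y <;> rcases r with z | z <;> simp <;>
      first
        | exact dist_triangle _ _ _
        | exact dist_nonneg
        | linarith [hX x z]
        | linarith [hY x z]
  eq_of_dist_eq_zero := by
    rintro (x | x) (y | y) h
    · exact congrArg Sum.inl (eq_of_dist_eq_zero h)
    · exact absurd h (ne_of_gt hc)
    · exact absurd h (ne_of_gt hc)
    · exact congrArg Sum.inr (eq_of_dist_eq_zero h)

/-- If two nonempty compact spaces both have diameter at most `2c`, their
Gromov–Hausdorff distance is at most `c`. -/
lemma ghDist_le_of_bounded (X Y : Type*) [MetricSpace X] [CompactSpace X] [Nonempty X]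
    [MetricSpace Y] [CompactSpace Y] [Nonempty Y] (c : ℝ) (hc : 0 < c)
    (hX : ∀ x x' : X, dist x x' ≤ 2 * c) (hY : ∀ y y' : Y, dist y y' ≤ 2 * c) :
    ghDist X Y ≤ c := by
  letI := crossMet X Y c hc hX hY
  have hl : Isometry (Sum.inl : X → X ⊕ Y) := Isometry.of_dist_eq fun x x' => rfl
  have hr : Isometry (Sum.inr : Y → X ⊕ Y) := Isometry.of_dist_eq fun y y' => rfl
  refine le_trans (ghDist_le_hausdorffDist hl hr) ?_
  apply hausdorffDist_le_of_mem_dist hc.le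
  · rintro _ ⟨x, rfl⟩
    exact ⟨Sum.inr (Classical.arbitrary Y), ⟨_, rfl⟩, le_of_eq rfl⟩
  · rintro _ ⟨y, rfl⟩
    exact ⟨Sum.inl (Classical.arbitrary X), ⟨_, rfl⟩, le_of_eq rfl⟩

/-- let `Y` be a finite metric space with `n ≥ 1` points all of whose nonzero
distances lie in `{a, b}` with `0 < a < b ≤ 2a`.  Then for every positive integer `m` one
has `2 d_GH(aΔ_m, Y) ≤ b`, and moreover `2 d_GH(aΔ_m, Y) < b` whenever `m ≥ n`. -/
theorem two_ghDist_simplex_twoDistance_le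
    (Y : Type*) [MetricSpace Y] [Fintype Y] [Nonempty Y]
    (a b : ℝ) (ha : 0 < a) (hab : a < b) (hb : b ≤ 2 * a)
    (hdist : ∀ x y : Y, x ≠ y → dist x y = a ∨ dist x y = b)
    (m : ℕ) (hm : 0 < m) :
    2 * ghSimplex a ha m Y ≤ b ∧
    (Fintype.card Y ≤ m → 2 * ghSimplex a ha m Y < b) := by
  letI I := simplexMet a ha m
  haveI : Nonempty (Fin m) := Fin.pos_iff_nonempty.mp hm
  have hdS : ∀ x y : Fin m, dist x y = if x = y then 0 else a := fun _ _ => rfl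
  have hYle : ∀ y y' : Y, dist y y' ≤ b := by
    intro y y'
    rcases eq_or_ne y y' with h | h
    · simp [h]; linarith
    · rcases hdist y y' h with h' | h' <;> rw [h'] <;> linarith
  have hgh : ghSimplex a ha m Y = ghDist (Fin m) Y := by
    unfold ghSimplex
    rw [dif_pos hm]
  constructor
  · -- 2 * ghDist ≤ b : both spaces have diameter ≤ b = 2 * (b/2)
    have h1 : ghDist (Fin m) Y ≤ b / 2 := by
      apply ghDist_le_of_bounded
      · linarith
      · intro x x'
        rw [hdS]
        split <;> linarith
      · intro y y'
        have := hYle y y'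
        linarith
    rw [hgh]; linarith
  · -- strict inequality when card Y ≤ m
    intro hcard
    obtain ⟨g⟩ : Nonempty (Y ↪ Fin m) := by
      apply Function.Embedding.nonempty_of_card_le
      simpa using hcard
    set f : Fin m → Y := Function.invFun g with hf
    have hfs : Function.Surjective f := Function.invFun_surjective g.injective
    have h2 : ghDist (Fin m) Y ≤ 0 + a / 2 + 0 := by
      apply ghDist_le_of_approx_subsets (s := (Set.univ : Set (Fin m)))
        (Φ := fun x => f x.1)
      · intro x
        exact ⟨x, Set.mem_univ x, by simp⟩
      · intro y
        obtain ⟨x, hx⟩ := hfs y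
        exact ⟨⟨x, Set.mem_univ x⟩, by simp [hx]⟩
      · intro x y
        rw [Subtype.dist_eq, hdS]
        rcases eq_or_ne (x : Fin m) (y : Fin m) with h | h
        · simp [h, abs_of_nonpos, ha.le]
        · rw [if_neg h]
          rcases eq_or_ne (f x.1) (f y.1) with h' | h'
          · simp [h', abs_of_nonneg ha.le]
          · rcases hdist _ _ h' with h'' | h'' <;> rw [h''] <;>
              rw [abs_le] <;> constructor <;> linarith
    rw [hgh]
    calc 2 * ghDist (Fin m) Y ≤ 2 * (0 + a / 2 + 0) := by linarith
      _ = a := by ring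
      _ < b := hab
end
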